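/- arXiv:2008.07423 — 3 statements merged into one kernel-verified Lean document; each statement's English description precedes it below -/
import Mathlib

section
/- If the past varentropy is constant, V(_tX) = v ≥ 0 for all t ∈ D, then |H(_tX) + log q(t)| = √v for all t ∈ D. -/
open Real MeasureTheory

/-- If the past varentropy is constant, `V(_tX) = v ≥ 0` on `D`, then
`|H(_tX) + log q(t)| = √v` for all `t ∈ D`. -/
theorem constant_past_varentropy (q H V : ℝ → ℝ) (D : Set ℝ) (hD : IsOpen D)
    (v : ℝ) (hv : 0 ≤ v)
    (hq : ∀ t ∈ D, 0 < q t)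
    (hderiv : ∀ t ∈ D, HasDerivAt V (-(q t) * (V t - (H t + Real.log (q t))^2)) t)
    (hconst : ∀ t ∈ D, V t = v) :
    ∀ t ∈ D, |H t + Real.log (q t)| = Real.sqrt v := by
  intro t ht
  have hmem : D ∈ nhds t := hD.mem_nhds ht
  have heq : V =ᶠ[nhds t] fun _ => v := by
    filter_upwards [hmem] with x hx using hconst x hx
  have h0 : HasDerivAt V 0 t :=
    (hasDerivAt_const t v).congr_of_eventuallyEq heq
  have huniq : -(q t) * (V t - (H t + Real.log (q t))^2) = 0 :=
    (hderiv t ht).unique h0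
  have hqne : q t ≠ 0 := (hq t ht).ne'
  have hsq : (H t + Real.log (q t))^2 = v := by
    rcases mul_eq_zero.mp huniq with h | h
    · exact absurd h (by simpa using hqne)
    · have := sub_eq_zero.mp h
      rw [hconst t ht] at this
      exact this.symm
  rw [← hsq, Real.sqrt_sq_eq_abs]
end

section
/- For Y = aX + b with a > 0, b ≥ 0, the past varentropies satisfy V(_tY) = V(_{(t-b)/a}X) for all admissible t; in particular past varentropy is invariant under positive affine transformations. -/
open Real MeasureTheory

/-!
The substitution `x = a y + b` turns the past varentropy of `Y` into an integral over `(-b/a, s)`,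
`s = (t - b)/a`, which reduces to `(0, s)` because `f` vanishes on the negative half-line. There
the density of `Y` is `f / a`, so with `q = f / F(s)` both sides become the variance of `log f`
under the probability density `q` on `(0, s)`, shifted by the constant `log (a F(s))` on one side
and `log F(s)` on the other; a variance does not see such shifts.
-/

namespace intervalIntegral

theorem integral_eq_integral_zero_of_eq_zero_of_nonpos {g : ℝ → ℝ} {u : ℝ} (hu : u ≤ 0)
    (hg : ∀ x ≤ 0, g x = 0) (v : ℝ) : ∫ x in u..v, g x = ∫ x in 0..v, g x := by
  have hg_eqOn : Set.EqOn g 0 (Set.uIcc u 0) := fun x hx => by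
    rw [Set.uIcc_of_le hu] at hx
    exact hg x hx.2
  have hg_int : IntervalIntegrable g volume u 0 :=
    (intervalIntegrable_congr (hg_eqOn.mono Set.uIoc_subset_uIcc)).2 intervalIntegrable_const
  have hg_zero : ∫ x in u..0, g x = 0 := by
    rw [integral_congr hg_eqOn]
    simp
  by_cases hv : IntervalIntegrable g volume 0 v
  · rw [← integral_add_adjacent_intervals hg_int hv, hg_zero, zero_add]
  · rw [integral_undef hv, integral_undef fun h => hv (hg_int.symm.trans h)]

theorem integral_comp_sub_div_of_eq_zero_of_nonpos {g : ℝ → ℝ} {a b : ℝ} (ha : a ≠ 0)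
    (hba : 0 ≤ b / a) (hg : ∀ x ≤ 0, g x = 0) (t : ℝ) :
    ∫ x in 0..t, g ((x - b) / a) = a * ∫ x in 0..(t - b) / a, g x := by
  simp_rw [sub_div]
  rw [integral_comp_div_sub g ha, smul_eq_mul, zero_div, zero_sub,
    integral_eq_integral_zero_of_eq_zero_of_nonpos (neg_nonpos.2 hba) hg]

theorem integral_mul_sub_sq_sub_sq {q ℓ : ℝ → ℝ} {u v : ℝ} (hq : ∫ x in u..v, q x = 1)
    (hq_int : IntervalIntegrable q volume u v)
    (hqℓ : IntervalIntegrable (fun x => q x * ℓ x) volume u v)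
    (hqℓ2 : IntervalIntegrable (fun x => q x * ℓ x ^ 2) volume u v) (L : ℝ) :
    (∫ x in u..v, q x * (ℓ x - L) ^ 2) - (∫ x in u..v, q x * (ℓ x - L)) ^ 2
      = (∫ x in u..v, q x * ℓ x ^ 2) - (∫ x in u..v, q x * ℓ x) ^ 2 := by
  have h_sq : ∫ x in u..v, q x * (ℓ x - L) ^ 2
      = (∫ x in u..v, q x * ℓ x ^ 2) - 2 * L * (∫ x in u..v, q x * ℓ x) + L ^ 2 := by
    have : (fun x => q x * (ℓ x - L) ^ 2)
        = fun x => q x * ℓ x ^ 2 - 2 * L * (q x * ℓ x) + L ^ 2 * q x := by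
      ext x; ring
    rw [this, integral_add (hqℓ2.sub (hqℓ.const_mul _)) (hq_int.const_mul _),
      integral_sub hqℓ2 (hqℓ.const_mul _), integral_const_mul, integral_const_mul, hq, mul_one]
  have h_lin : ∫ x in u..v, q x * (ℓ x - L) = (∫ x in u..v, q x * ℓ x) - L := by
    have : (fun x => q x * (ℓ x - L)) = fun x => q x * ℓ x - L * q x := by
      ext x; ring
    rw [this, integral_sub hqℓ (hq_int.const_mul _), integral_const_mul, hq, mul_one]
  rw [h_sq, h_lin]
  ring

end intervalIntegral

theorem Real.div_mul_log_div_pow (y : ℝ) {c : ℝ} (hc : c ≠ 0) (n : ℕ) :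
    y / c * log (y / c) ^ n = y / c * (log y - log c) ^ n := by
  rcases eq_or_ne y 0 with rfl | hy
  · simp
  · rw [log_div hy hc]

theorem integral_affine_density_mul_log_pow {f : ℝ → ℝ} {a b F₀ : ℝ} (ha : 0 < a) (hb : 0 ≤ b)
    (hF₀ : F₀ ≠ 0) (hf0 : ∀ x ≤ 0, f x = 0) (t : ℝ) (n : ℕ) :
    ∫ x in 0..t, ((1 / a) * f ((x - b) / a)) / F₀ * log (((1 / a) * f ((x - b) / a)) / F₀) ^ n
      = ∫ x in 0..(t - b) / a, f x / F₀ * (log (f x) - log (a * F₀)) ^ n := by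
  rw [intervalIntegral.integral_comp_sub_div_of_eq_zero_of_nonpos
      (g := fun y => ((1 / a) * f y) / F₀ * log (((1 / a) * f y) / F₀) ^ n)
      ha.ne' (div_nonneg hb ha.le) (fun y hy => by simp [hf0 y hy]),
    ← intervalIntegral.integral_const_mul]
  refine intervalIntegral.integral_congr fun y _ => ?_
  have h_density : (1 / a) * f y / F₀ = f y / (a * F₀) := by field_simp
  simp only [h_density, Real.div_mul_log_div_pow _ (mul_ne_zero ha.ne' hF₀)]
  field_simp

theorem past_varentropy_affine_general (f F : ℝ → ℝ) (a b t : ℝ) (ha : 0 < a) (hb : 0 ≤ b)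
    (hf0 : ∀ x ≤ (0:ℝ), f x = 0)
    (hFpos : 0 < F ((t - b) / a))
    (hcdf : (∫ x in (0:ℝ)..((t - b) / a), f x) = F ((t - b) / a))
    (hflogf : IntervalIntegrable (fun x => f x * Real.log (f x)) volume 0 ((t - b) / a))
    (hflogf2 : IntervalIntegrable (fun x => f x * (Real.log (f x))^2) volume 0 ((t - b) / a)) :
    (∫ x in (0:ℝ)..t,
        ((1/a) * f ((x - b) / a)) / F ((t - b) / a)
          * (Real.log (((1/a) * f ((x - b) / a)) / F ((t - b) / a)))^2)
      - (∫ x in (0:ℝ)..t,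
        ((1/a) * f ((x - b) / a)) / F ((t - b) / a)
          * Real.log (((1/a) * f ((x - b) / a)) / F ((t - b) / a)))^2
    = (∫ x in (0:ℝ)..((t - b) / a),
        f x / F ((t - b) / a) * (Real.log (f x / F ((t - b) / a)))^2)
      - (∫ x in (0:ℝ)..((t - b) / a),
        f x / F ((t - b) / a) * Real.log (f x / F ((t - b) / a)))^2 := by
  set s := (t - b) / a
  set F₀ := F s
  have hF₀ : F₀ ≠ 0 := hFpos.ne'
  have hf_int : IntervalIntegrable f volume 0 s :=
    intervalIntegral.intervalIntegrable_of_integral_ne_zero (hcdf ▸ hF₀)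
  have hq : ∫ x in 0..s, f x / F₀ = 1 := by
    rw [intervalIntegral.integral_div, hcdf, div_self hF₀]
  have shift := intervalIntegral.integral_mul_sub_sq_sub_sq (ℓ := fun x => log (f x)) hq
    (hf_int.div_const F₀) (by simpa only [div_mul_eq_mul_div] using hflogf.div_const F₀)
    (by simpa only [div_mul_eq_mul_div] using hflogf2.div_const F₀)
  have h_rhs (n : ℕ) : ∫ x in 0..s, f x / F₀ * log (f x / F₀) ^ n
      = ∫ x in 0..s, f x / F₀ * (log (f x) - log F₀) ^ n :=
    intervalIntegral.integral_congr fun x _ => Real.div_mul_log_div_pow _ hF₀ n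
  have h_lhs := integral_affine_density_mul_log_pow ha hb hF₀ hf0 t
  have h_rhs1 := h_rhs 1
  have h_lhs1 := h_lhs 1
  simp only [pow_one] at h_rhs1 h_lhs1
  rw [h_lhs 2, h_lhs1, h_rhs 2, h_rhs1, shift, shift]

/-- For `Y = aX + b` with `a > 0`, `b ≥ 0`, the past varentropies satisfy
`V(_tY) = V(_{(t-b)/a}X)`: past varentropy is invariant under positive affine
transformations. -/
theorem past_varentropy_affine (f F : ℝ → ℝ) (a b t : ℝ) (ha : 0 < a) (hb : 0 ≤ b)
    (hf0 : ∀ x ≤ (0:ℝ), f x = 0) (hfnn : ∀ x, 0 ≤ f x)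
    (hts : 0 < (t - b) / a) (hFpos : 0 < F ((t - b) / a))
    (hcdf : (∫ x in (0:ℝ)..((t - b) / a), f x) = F ((t - b) / a))
    (hflogf : IntervalIntegrable (fun x => f x * Real.log (f x)) volume 0 ((t - b) / a))
    (hflogf2 : IntervalIntegrable (fun x => f x * (Real.log (f x))^2) volume 0 ((t - b) / a)) :
    (∫ x in (0:ℝ)..t,
        ((1/a) * f ((x - b) / a)) / F ((t - b) / a)
          * (Real.log (((1/a) * f ((x - b) / a)) / F ((t - b) / a)))^2)
      - (∫ x in (0:ℝ)..t,
        ((1/a) * f ((x - b) / a)) / F ((t - b) / a)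
          * Real.log (((1/a) * f ((x - b) / a)) / F ((t - b) / a)))^2
    = (∫ x in (0:ℝ)..((t - b) / a),
        f x / F ((t - b) / a) * (Real.log (f x / F ((t - b) / a)))^2)
      - (∫ x in (0:ℝ)..((t - b) / a),
        f x / F ((t - b) / a) * Real.log (f x / F ((t - b) / a)))^2 :=
  past_varentropy_affine_general f F a b t ha hb hf0 hFpos hcdf hflogf hflogf2
end

section
/- If X is a nonnegative absolutely continuous random variable with log-concave pdf f, then the past varentropy satisfies V(_tX) ≤ 1 for all t in the support. -/
/-!
On `(0, t)` write `p = f / F`, `u = log f`, `M = sup u` and `v = M - u`, which is convex,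
nonnegative and has infimum `0`. Then `p = K e^{-v}` with `K = e^M / F`, and with
`c = log K - 1` one has `p ((log p - c)² - 1) = -K G(v)` for `G(y) = (2y - y²) e^{-y}` (`varGap`).
Hence `Var(log p) ≤ E (log p - c)² = 1 - K ∫ G(v)`, and it suffices that `∫ G(v) ≥ 0`.

Writing `G(y) = ∫_y^∞ w` with `w(ρ) = (4ρ - ρ² - 2) e^{-ρ}` (`varGapWeight`), Fubini gives
`∫ G(v) = ∫_0^∞ w(ρ) ℓ(ρ) dρ`, where `ℓ(ρ) = |{v < ρ}|` is concave because `v` is convex.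
The weight `w` integrates every affine function to `0` over `(0, ∞)`, and it is positive exactly
between its roots `2 ± √2`. A concave `ℓ` lies above its chord through these roots between them
and below it outside, so `∫ w ℓ = ∫ w (ℓ - chord) ≥ 0`.
-/

open Real MeasureTheory Set Filter Topology Pointwise

noncomputable def varGap (y : ℝ) : ℝ := (2 * y - y ^ 2) * exp (-y)

noncomputable def varGapWeight (ρ : ℝ) : ℝ := (4 * ρ - ρ ^ 2 - 2) * exp (-ρ)

lemma continuous_varGapWeight : Continuous varGapWeight := by
  unfold varGapWeight; fun_prop

lemma varGapWeight_eq (ρ : ℝ) :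
    varGapWeight ρ = -((ρ - (2 - √2)) * (ρ - (2 + √2))) * exp (-ρ) := by
  have h : √2 ^ 2 = 2 := sq_sqrt zero_le_two
  unfold varGapWeight
  linear_combination (-exp (-ρ)) * h

lemma hasDerivAt_varGap (y : ℝ) : HasDerivAt varGap (-varGapWeight y) y := by
  have h := (((hasDerivAt_id y).const_mul 2).sub (hasDerivAt_pow 2 y)).mul (hasDerivAt_neg y).exp
  exact h.congr_deriv (by
    simp only [varGapWeight, id_eq, Pi.sub_apply, Nat.cast_ofNat, Nat.add_one_sub_one, pow_one]
    ring)

lemma integrableOn_Ioi_pow_mul_exp_neg (n : ℕ) (a : ℝ) :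
    IntegrableOn (fun x => x ^ n * exp (-x)) (Ioi a) := by
  refine integrable_of_isBigO_exp_neg (b := 1 / 2) one_half_pos (by fun_prop) ?_
  have := ((isLittleO_pow_exp_pos_mul_atTop n one_half_pos).isBigO).mul
    (Asymptotics.isBigO_refl (fun x : ℝ => exp (-x)) atTop)
  refine this.congr_right fun x => ?_
  rw [← exp_add]; ring_nf

lemma integrableOn_Ioi_varGapWeight (a : ℝ) : IntegrableOn varGapWeight (Ioi a) := by
  have h := (((integrableOn_Ioi_pow_mul_exp_neg 1 a).const_mul 4).sub
    (integrableOn_Ioi_pow_mul_exp_neg 2 a)).sub ((integrableOn_Ioi_pow_mul_exp_neg 0 a).const_mul 2)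
  refine IntegrableOn.congr_fun h (fun x _ => ?_) measurableSet_Ioi
  simp only [varGapWeight, Pi.sub_apply]; ring

lemma integrableOn_Ioi_mul_varGapWeight (a : ℝ) :
    IntegrableOn (fun ρ => ρ * varGapWeight ρ) (Ioi a) := by
  have h := (((integrableOn_Ioi_pow_mul_exp_neg 2 a).const_mul 4).sub
    (integrableOn_Ioi_pow_mul_exp_neg 3 a)).sub ((integrableOn_Ioi_pow_mul_exp_neg 1 a).const_mul 2)
  refine IntegrableOn.congr_fun h (fun x _ => ?_) measurableSet_Ioi
  simp only [varGapWeight, Pi.sub_apply]; ring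

lemma tendsto_varGap_atTop : Tendsto varGap atTop (𝓝 0) := by
  have := ((tendsto_pow_mul_exp_neg_atTop_nhds_zero 1).const_mul 2).sub
    (tendsto_pow_mul_exp_neg_atTop_nhds_zero 2)
  simp only [mul_zero, sub_zero] at this
  exact this.congr fun y => by unfold varGap; ring

lemma integral_Ioi_varGapWeight (a : ℝ) : ∫ ρ in Ioi a, varGapWeight ρ = varGap a := by
  have := integral_Ioi_of_hasDerivAt_of_tendsto' (fun y _ => hasDerivAt_varGap y)
    (integrableOn_Ioi_varGapWeight a).neg tendsto_varGap_atTop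
  rw [integral_neg] at this
  linarith

lemma integral_Ioi_zero_mul_varGapWeight : ∫ ρ in Ioi (0 : ℝ), ρ * varGapWeight ρ = 0 := by
  set H : ℝ → ℝ := fun r => (r ^ 2 - r ^ 3) * exp (-r)
  have hH : ∀ r, HasDerivAt H (-(r * varGapWeight r)) r := fun r => by
    have h := ((hasDerivAt_pow 2 r).sub (hasDerivAt_pow 3 r)).mul (hasDerivAt_neg r).exp
    exact h.congr_deriv (by
      simp only [varGapWeight, Pi.sub_apply, Nat.cast_ofNat, Nat.add_one_sub_one, pow_one]
      ring)
  have hlim : Tendsto H atTop (𝓝 0) := by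
    have := (tendsto_pow_mul_exp_neg_atTop_nhds_zero 2).sub
      (tendsto_pow_mul_exp_neg_atTop_nhds_zero 3)
    simp only [sub_zero] at this
    exact this.congr fun r => by simp only [H]; ring
  have := integral_Ioi_of_hasDerivAt_of_tendsto' (fun r _ => hH r)
    (integrableOn_Ioi_mul_varGapWeight 0).neg hlim
  rw [integral_neg] at this
  simpa [H] using this

lemma integral_Ioi_zero_varGapWeight_mul_affine (a b : ℝ) :
    ∫ ρ in Ioi (0 : ℝ), varGapWeight ρ * (a + b * ρ) = 0 := by
  have ha := (integrableOn_Ioi_varGapWeight 0).const_mul a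
  have hb := (integrableOn_Ioi_mul_varGapWeight 0).const_mul b
  calc ∫ ρ in Ioi (0 : ℝ), varGapWeight ρ * (a + b * ρ)
      = ∫ ρ in Ioi (0 : ℝ), (a * varGapWeight ρ + b * (ρ * varGapWeight ρ)) :=
        integral_congr_ae (ae_of_all _ fun ρ => by ring)
    _ = 0 := by
        rw [integral_add ha hb, integral_const_mul, integral_const_mul, integral_Ioi_varGapWeight,
          integral_Ioi_zero_mul_varGapWeight]
        simp [varGap]

lemma ConcaveOn.mul_sub_chord_nonpos {s : Set ℝ} {f : ℝ → ℝ} (hf : ConcaveOn ℝ s f)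
    {p q ρ : ℝ} (hp : p ∈ s) (hq : q ∈ s) (hρ : ρ ∈ s) (hpq : p < q) :
    (ρ - p) * (ρ - q) * ((q - p) * f ρ - ((q - ρ) * f p + (ρ - p) * f q)) ≤ 0 := by
  rcases lt_trichotomy ρ p with hρp | rfl | hpρ
  · have := hf.neg.secant_mono_aux1 hρ hq hρp hpq
    simp only [Pi.neg_apply] at this
    exact mul_nonpos_of_nonneg_of_nonpos (by nlinarith) (by nlinarith)
  · simp
  rcases lt_trichotomy ρ q with hρq | rfl | hqρ
  · have := hf.neg.secant_mono_aux1 hp hq hpρ hρq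
    simp only [Pi.neg_apply] at this
    exact mul_nonpos_of_nonpos_of_nonneg (by nlinarith) (by nlinarith)
  · simp
  · have := hf.neg.secant_mono_aux1 hp hρ hpq hqρ
    simp only [Pi.neg_apply] at this
    exact mul_nonpos_of_nonneg_of_nonpos (by nlinarith) (by nlinarith)

lemma ConcaveOn.integral_varGapWeight_mul_nonneg {l : ℝ → ℝ} (hl : ConcaveOn ℝ (Ioi 0) l)
    (hint : IntegrableOn (fun ρ => varGapWeight ρ * l ρ) (Ioi 0)) :
    0 ≤ ∫ ρ in Ioi (0 : ℝ), varGapWeight ρ * l ρ := by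
  set r₁ := 2 - √2
  set r₂ := 2 + √2
  have hr₁ : r₁ ∈ Ioi 0 := by
    have : √2 < 2 := by rw [sqrt_lt' two_pos]; norm_num
    exact sub_pos.2 this
  have hr₂ : r₂ ∈ Ioi 0 := show (0 : ℝ) < 2 + √2 by positivity
  have hr₁₂ : r₁ < r₂ := by have := sqrt_pos.2 (two_pos (α := ℝ)); simp only [r₁, r₂]; linarith
  set b := (l r₂ - l r₁) / (r₂ - r₁)
  set a := l r₁ - b * r₁
  have hchord : ∀ ρ, (r₂ - r₁) * (a + b * ρ) = (r₂ - ρ) * l r₁ + (ρ - r₁) * l r₂ := fun ρ => by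
    have : r₂ - r₁ ≠ 0 := sub_ne_zero.2 hr₁₂.ne'
    simp only [a, b]; field_simp; ring
  have hline : IntegrableOn (fun ρ => varGapWeight ρ * (a + b * ρ)) (Ioi 0) :=
    IntegrableOn.congr_fun (((integrableOn_Ioi_varGapWeight 0).const_mul a).add
      ((integrableOn_Ioi_mul_varGapWeight 0).const_mul b))
      (fun ρ _ => by simp only [Pi.add_apply]; ring) measurableSet_Ioi
  refine (integral_Ioi_zero_varGapWeight_mul_affine a b).symm.le.trans <|
    setIntegral_mono_on hline hint measurableSet_Ioi fun ρ hρ => ?_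
  have key := hl.mul_sub_chord_nonpos hr₁ hr₂ hρ hr₁₂
  rw [← hchord, ← mul_sub] at key
  rw [← sub_nonneg, ← mul_sub, varGapWeight_eq]
  have := exp_pos (-ρ)
  have := sub_pos.2 hr₁₂
  nlinarith

lemma IsConnected.volume_real_eq_csSup_sub_csInf {s : Set ℝ} (hs : IsConnected s)
    (hb : BddBelow s) (ha : BddAbove s) : volume.real s = sSup s - sInf s := by
  have hle : sInf s ≤ sSup s := csInf_le_csSup hs.nonempty hb ha
  apply le_antisymm
  · calc volume.real s ≤ volume.real (Icc (sInf s) (sSup s)) :=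
          measureReal_mono (subset_Icc_csInf_csSup hb ha) measure_Icc_lt_top.ne
      _ = sSup s - sInf s := Real.volume_real_Icc_of_le hle
  · calc sSup s - sInf s = volume.real (Ioo (sInf s) (sSup s)) :=
          (Real.volume_real_Ioo_of_le hle).symm
      _ ≤ volume.real s := measureReal_mono (hs.Ioo_csInf_csSup_subset hb ha)
          (isBounded_iff_bddBelow_bddAbove.2 ⟨hb, ha⟩).measure_lt_top.ne

lemma ConvexOn.smul_add_smul_sublevel_subset {E : Type*} [AddCommGroup E] [Module ℝ E]
    {s : Set E} {v : E → ℝ} (hv : ConvexOn ℝ s v) {a b ρ₁ ρ₂ : ℝ} (ha : 0 ≤ a) (hb : 0 ≤ b)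
    (hab : a + b = 1) :
    a • {x ∈ s | v x < ρ₁} + b • {x ∈ s | v x < ρ₂} ⊆ {x ∈ s | v x < a * ρ₁ + b * ρ₂} := by
  rintro _ ⟨_, ⟨x₁, ⟨hx₁, hv₁⟩, rfl⟩, _, ⟨x₂, ⟨hx₂, hv₂⟩, rfl⟩, rfl⟩
  refine ⟨hv.1 hx₁ hx₂ ha hb hab, (hv.2 hx₁ hx₂ ha hb hab).trans_lt ?_⟩
  simp only [smul_eq_mul]
  rcases ha.eq_or_lt with rfl | ha'
  · simp only [zero_add] at hab; subst hab; simpa using hv₂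
  · nlinarith [mul_lt_mul_of_pos_left hv₁ ha', mul_le_mul_of_nonneg_left hv₂.le hb]

lemma ConvexOn.concaveOn_volume_real_sublevel {s : Set ℝ} {v : ℝ → ℝ} (hv : ConvexOn ℝ s v)
    (hs : Bornology.IsBounded s) {D : Set ℝ} (hD : Convex ℝ D)
    (hne : ∀ ρ ∈ D, ∃ x ∈ s, v x < ρ) :
    ConcaveOn ℝ D fun ρ => volume.real {x ∈ s | v x < ρ} := by
  set A : ℝ → Set ℝ := fun ρ => {x ∈ s | v x < ρ}
  have hAne : ∀ ρ ∈ D, (A ρ).Nonempty := fun ρ hρ => by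
    obtain ⟨x, hx, hvx⟩ := hne ρ hρ
    exact ⟨x, hx, hvx⟩
  have hA : ∀ ρ, Bornology.IsBounded (A ρ) := fun ρ => hs.subset (sep_subset _ _)
  have hlen : ∀ ρ ∈ D, volume.real (A ρ) = sSup (A ρ) - sInf (A ρ) := fun ρ hρ =>
    ((hv.convex_lt ρ).isConnected (hAne ρ hρ)).volume_real_eq_csSup_sub_csInf
      (hA ρ).bddBelow (hA ρ).bddAbove
  refine ⟨hD, fun ρ₁ h₁ ρ₂ h₂ a b ha hb hab => ?_⟩
  have hsub : a • A ρ₁ + b • A ρ₂ ⊆ A (a * ρ₁ + b * ρ₂) :=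
    hv.smul_add_smul_sublevel_subset ha hb hab
  have hne₁ := (hAne ρ₁ h₁).smul_set (a := a)
  have hne₂ := (hAne ρ₂ h₂).smul_set (a := b)
  have hsup : a * sSup (A ρ₁) + b * sSup (A ρ₂) ≤ sSup (A (a * ρ₁ + b * ρ₂)) := by
    have h := csSup_add hne₁ ((hA ρ₁).bddAbove.smul_of_nonneg ha) hne₂
      ((hA ρ₂).bddAbove.smul_of_nonneg hb)
    rw [Real.sSup_smul_of_nonneg ha, Real.sSup_smul_of_nonneg hb] at h
    exact h ▸ csSup_le_csSup (hA _).bddAbove (hne₁.add hne₂) hsub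
  have hinf : sInf (A (a * ρ₁ + b * ρ₂)) ≤ a * sInf (A ρ₁) + b * sInf (A ρ₂) := by
    have h := csInf_add hne₁ ((hA ρ₁).bddBelow.smul_of_nonneg ha) hne₂
      ((hA ρ₂).bddBelow.smul_of_nonneg hb)
    rw [Real.sInf_smul_of_nonneg ha, Real.sInf_smul_of_nonneg hb] at h
    exact h ▸ csInf_le_csInf (hA _).bddBelow (hne₁.add hne₂) hsub
  show a * volume.real (A ρ₁) + b * volume.real (A ρ₂) ≤ volume.real (A (a * ρ₁ + b * ρ₂))
  have hρ : a * ρ₁ + b * ρ₂ ∈ D := hD h₁ h₂ ha hb hab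
  rw [hlen _ h₁, hlen _ h₂, hlen _ hρ]
  linarith

lemma integral_setIntegral_Ioi_eq_setIntegral_mul_measureReal_lt {α : Type*}
    [MeasurableSpace α] (μ : Measure α) [IsFiniteMeasure μ] {g : ℝ → ℝ}
    (hg : IntegrableOn g (Ioi 0)) {v : α → ℝ} (hv : AEMeasurable v μ) (hv0 : ∀ᵐ x ∂μ, 0 ≤ v x) :
    ∫ x, (∫ ρ in Ioi (v x), g ρ) ∂μ = ∫ ρ in Ioi 0, g ρ * μ.real {x | v x < ρ} := by
  set w := hv.mk v
  have hvw : v =ᵐ[μ] w := hv.ae_eq_mk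
  set S : Set (α × ℝ) := {p | w p.1 < p.2}
  have hS : MeasurableSet S :=
    measurableSet_lt (hv.measurable_mk.comp measurable_fst) measurable_snd
  have hF : Integrable (S.indicator fun p => g p.2) (μ.prod (volume.restrict (Ioi 0))) :=
    (hg.comp_snd μ).indicator hS
  calc ∫ x, (∫ ρ in Ioi (v x), g ρ) ∂μ
      = ∫ x, (∫ ρ in Ioi 0, S.indicator (fun p => g p.2) (x, ρ)) ∂μ := by
        refine integral_congr_ae ?_
        filter_upwards [hvw, hv0] with x hx hx0
        have hsec : (fun ρ => S.indicator (fun p => g p.2) (x, ρ)) = (Ioi (w x)).indicator g := by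
          ext ρ; simp [S, indicator_apply]
        rw [hsec, integral_indicator measurableSet_Ioi, Measure.restrict_restrict measurableSet_Ioi,
          Ioi_inter_Ioi, sup_eq_left.2 (hx ▸ hx0), hx]
    _ = ∫ ρ in Ioi 0, (∫ x, S.indicator (fun p => g p.2) (x, ρ) ∂μ) := integral_integral_swap hF
    _ = ∫ ρ in Ioi 0, g ρ * μ.real {x | v x < ρ} := by
        refine integral_congr_ae (ae_of_all _ fun ρ => ?_)
        have hsec : (fun x => S.indicator (fun p => g p.2) (x, ρ)) =
            {x | w x < ρ}.indicator fun _ => g ρ := by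
          ext x; simp [S, indicator_apply]
        have hlevel : {x | v x < ρ} =ᵐ[μ] {x | w x < ρ} :=
          hvw.mono fun x (hx : v x = w x) => show (v x < ρ) = (w x < ρ) by rw [hx]
        simp only [hsec]
        rw [integral_indicator_const _ (measurableSet_lt hv.measurable_mk measurable_const),
          smul_eq_mul, measureReal_congr hlevel, mul_comm]

theorem ConvexOn.setIntegral_varGap_nonneg {a b : ℝ} {v : ℝ → ℝ} (hv : ConvexOn ℝ (Ioo a b) v)
    (hv0 : ∀ x ∈ Ioo a b, 0 ≤ v x) (hv_inf : ∀ ε ∈ Ioi 0, ∃ x ∈ Ioo a b, v x < ε) :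
    0 ≤ ∫ x in Ioo a b, varGap (v x) := by
  set l : ℝ → ℝ := fun ρ => volume.real {x ∈ Ioo a b | v x < ρ}
  have hlevel : ∀ ρ, (volume.restrict (Ioo a b)).real {x | v x < ρ} = l ρ := fun ρ => by
    rw [measureReal_restrict_apply' measurableSet_Ioo, inter_comm]; rfl
  have hl : ConcaveOn ℝ (Ioi 0) l :=
    hv.concaveOn_volume_real_sublevel (Metric.isBounded_Ioo a b) (convex_Ioi 0) hv_inf
  have hl_le : ∀ ρ, ‖l ρ‖ ≤ volume.real (Ioo a b) := fun ρ => by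
    rw [norm_of_nonneg measureReal_nonneg]
    exact measureReal_mono (sep_subset _ _) measure_Ioo_lt_top.ne
  have hint : IntegrableOn (fun ρ => varGapWeight ρ * l ρ) (Ioi 0) := by
    refine Integrable.mono'
      ((integrableOn_Ioi_varGapWeight 0).norm.mul_const (volume.real (Ioo a b)))
      (continuous_varGapWeight.aestronglyMeasurable.mul
        ((hl.continuousOn isOpen_Ioi).aestronglyMeasurable measurableSet_Ioi))
      (ae_of_all _ fun ρ => ?_)
    rw [norm_mul]
    exact mul_le_mul_of_nonneg_left (hl_le ρ) (norm_nonneg _)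
  have hlayer := integral_setIntegral_Ioi_eq_setIntegral_mul_measureReal_lt
    (volume.restrict (Ioo a b)) (integrableOn_Ioi_varGapWeight 0)
    ((hv.continuousOn isOpen_Ioo).aemeasurable measurableSet_Ioo)
    (ae_restrict_of_forall_mem measurableSet_Ioo hv0)
  simp only [integral_Ioi_varGapWeight, hlevel] at hlayer
  exact hlayer ▸ hl.integral_varGapWeight_mul_nonneg hint

lemma ConcaveOn.bddAbove_image_Ioo {u : ℝ → ℝ} {a : ℝ} (hu : ConcaveOn ℝ (Ioi a) u) (b : ℝ) :
    BddAbove (u '' Ioo a b) := by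
  refine ⟨(b + 1 - a) * |u b| + (b - a) * |u (b + 1)|, ?_⟩
  rintro _ ⟨ρ, hρ, rfl⟩
  have hb : b ∈ Ioi a := hρ.1.trans hρ.2
  have chord := hu.mul_sub_chord_nonpos hb (show a < b + 1 by linarith [mem_Ioi.1 hb])
    hρ.1 (lt_add_one b)
  have hpos : 0 < (ρ - b) * (ρ - (b + 1)) := mul_pos_of_neg_of_neg (by linarith [hρ.2])
    (by linarith [hρ.2])
  have hle := nonpos_of_mul_nonpos_right chord hpos
  obtain ⟨h1, h2⟩ := hρ
  nlinarith [mul_le_mul_of_nonneg_left (le_abs_self (u b)) (by linarith : (0 : ℝ) ≤ b + 1 - ρ),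
    mul_le_mul_of_nonneg_left (neg_le_abs (u (b + 1))) (by linarith : (0 : ℝ) ≤ b - ρ),
    mul_nonneg (abs_nonneg (u b)) (by linarith : (0 : ℝ) ≤ ρ - a),
    mul_nonneg (abs_nonneg (u (b + 1))) (by linarith : (0 : ℝ) ≤ ρ - a)]

/- Since `log 0 = 0` in Lean, the zeros of `f` are points where `log ∘ f` vanishes; this shows
they are negligible unless `0` is the maximum of `log ∘ f`. -/
lemma ConcaveOn.ae_ne_or_forall_le {s : Set ℝ} {u : ℝ → ℝ} (hu : ConcaveOn ℝ s u)
    (hs : MeasurableSet s) (c : ℝ) : ∀ᵐ x ∂volume.restrict s, u x ≠ c ∨ ∀ y ∈ s, u y ≤ c := by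
  by_cases h : ∀ y ∈ s, u y ≤ c
  · exact ae_of_all _ fun _ => Or.inr h
  obtain ⟨x₀, hx₀, hc⟩ : ∃ x₀ ∈ s, c < u x₀ := by simpa using h
  set L := {x ∈ s | u x = c}
  have hsegment : ∀ y ∈ L, ∀ z ∈ L, z ∉ openSegment ℝ x₀ y := fun y hy z hz hyz =>
    (hu.lt_right_of_left_lt hx₀ hy.1 hyz (hz.2.trans_lt hc)).ne (hy.2.trans hz.2.symm)
  have hleft : ∀ y ∈ {x ∈ L | x < x₀}, ∀ z ∈ {x ∈ L | x < x₀}, ¬y < z := fun y hy z hz hyz =>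
    hsegment y hy.1 z hz.1 (by rw [openSegment_symm, openSegment_eq_Ioo hy.2]; exact ⟨hyz, hz.2⟩)
  have hright : ∀ y ∈ {x ∈ L | x₀ < x}, ∀ z ∈ {x ∈ L | x₀ < x}, ¬y < z := fun y hy z hz hyz =>
    hsegment z hz.1 y hy.1 (by rw [openSegment_eq_Ioo hz.2]; exact ⟨hy.2, hyz⟩)
  have hL : volume L = 0 := by
    refine measure_mono_null (fun x hx => ?_) (measure_union_null
      (Set.Subsingleton.measure_zero (fun y hy z hz => le_antisymm (not_lt.1 (hleft z hz y hy))
        (not_lt.1 (hleft y hy z hz))) volume)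
      (Set.Subsingleton.measure_zero (fun y hy z hz => le_antisymm (not_lt.1 (hright z hz y hy))
        (not_lt.1 (hright y hy z hz))) volume))
    rcases lt_or_gt_of_ne (show x ≠ x₀ by rintro rfl; exact hc.ne' hx.2) with h | h
    exacts [Or.inl ⟨hx, h⟩, Or.inr ⟨hx, h⟩]
  refine (ae_restrict_iff' hs).2 ((measure_eq_zero_iff_ae_notMem.1 hL).mono fun x hx hxs => ?_)
  exact Or.inl fun h => hx ⟨hxs, h⟩

lemma Continuous.integrable_comp_of_mem_Icc {α : Type*} [MeasurableSpace α] {μ : Measure α}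
    [IsFiniteMeasure μ] {Φ : ℝ → ℝ} (hΦ : Continuous Φ) {p : α → ℝ}
    (hp : AEStronglyMeasurable p μ) {a b : ℝ} (hmem : ∀ᵐ x ∂μ, p x ∈ Icc a b) :
    Integrable (fun x => Φ (p x)) μ := by
  obtain ⟨C, hC⟩ := isCompact_Icc.exists_bound_of_continuousOn hΦ.continuousOn
  exact .of_bound (hΦ.comp_aestronglyMeasurable hp) C (hmem.mono fun x hx => hC _ hx)

lemma mul_log_sq_eq_sq_sqrt_mul_log_sqrt {y : ℝ} (hy : 0 ≤ y) :
    y * log y ^ 2 = (2 * (√y * log √y)) ^ 2 := by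
  rw [log_sqrt hy, mul_pow, mul_pow, sq_sqrt hy]; ring

lemma integral_mul_sq_sub_sq_le {α : Type*} [MeasurableSpace α] {μ : Measure α} {p g : α → ℝ}
    (c : ℝ) (hp : Integrable p μ) (hp1 : ∫ x, p x ∂μ = 1) (hpg : Integrable (fun x => p x * g x) μ)
    (hpg2 : Integrable (fun x => p x * g x ^ 2) μ) :
    ∫ x, p x * g x ^ 2 ∂μ - (∫ x, p x * g x ∂μ) ^ 2 ≤ 1 + ∫ x, p x * ((g x - c) ^ 2 - 1) ∂μ := by
  have hexpand : ∫ x, p x * ((g x - c) ^ 2 - 1) ∂μ =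
      ∫ x, p x * g x ^ 2 ∂μ - 2 * c * ∫ x, p x * g x ∂μ + (c ^ 2 - 1) := by
    calc ∫ x, p x * ((g x - c) ^ 2 - 1) ∂μ
        = ∫ x, (p x * g x ^ 2 - 2 * c * (p x * g x) + (c ^ 2 - 1) * p x) ∂μ :=
          integral_congr_ae (ae_of_all _ fun x => by ring)
      _ = _ := by
          rw [integral_add (f := fun x => p x * g x ^ 2 - 2 * c * (p x * g x))
              (hpg2.sub (hpg.const_mul _)) (hp.const_mul _),
            integral_sub hpg2 (hpg.const_mul _), integral_const_mul, integral_const_mul, hp1,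
            mul_one]
  rw [hexpand]
  nlinarith [sq_nonneg (∫ x, p x * g x ∂μ - c)]

/- The alternative `p x = 0 ∧ v x = 0` (zeros of the density, where Lean's `log 0 = 0`) adds
nothing to either side of the identity `p ((log p - c)² - 1) = -e^m varGap v`. -/
lemma integral_mul_log_sq_sub_sq_le_one {α : Type*} [MeasurableSpace α] {μ : Measure α}
    [IsFiniteMeasure μ] {p v : α → ℝ} {m : ℝ} (hp : AEStronglyMeasurable p μ)
    (hp1 : ∫ x, p x ∂μ = 1) (hpv : ∀ᵐ x ∂μ, p x = exp (m - v x) ∨ p x = 0 ∧ v x = 0)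
    (hv0 : ∀ᵐ x ∂μ, 0 ≤ v x) (hgap : 0 ≤ ∫ x, varGap (v x) ∂μ) :
    ∫ x, p x * log (p x) ^ 2 ∂μ - (∫ x, p x * log (p x) ∂μ) ^ 2 ≤ 1 := by
  have hmem : ∀ᵐ x ∂μ, p x ∈ Icc 0 (exp m) := by
    filter_upwards [hpv, hv0] with x hx hx0
    rcases hx with h | ⟨h, -⟩ <;> rw [h]
    · exact ⟨(exp_pos _).le, exp_le_exp.2 (by linarith)⟩
    · exact ⟨le_rfl, (exp_pos _).le⟩
  have hint1 := continuous_mul_log.integrable_comp_of_mem_Icc hp hmem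
  have hint2 : Integrable (fun x => p x * log (p x) ^ 2) μ :=
    ((continuous_const.mul (continuous_mul_log.comp continuous_sqrt)).pow 2
      |>.integrable_comp_of_mem_Icc hp hmem).congr
      (hmem.mono fun x hx => (mul_log_sq_eq_sq_sqrt_mul_log_sqrt hx.1).symm)
  have hid : ∀ᵐ x ∂μ, p x * ((log (p x) - (m - 1)) ^ 2 - 1) = -(exp m * varGap (v x)) := by
    filter_upwards [hpv] with x hx
    rcases hx with h | ⟨hp0, hv⟩
    · rw [h, log_exp, sub_eq_add_neg m (v x), exp_add, varGap]; ring
    · simp [hp0, hv, varGap]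
  have hvar := integral_mul_sq_sub_sq_le (m - 1) (.of_mem_Icc 0 (exp m) hp.aemeasurable hmem)
    hp1 hint1 hint2
  rw [integral_congr_ae hid, integral_neg, integral_const_mul] at hvar
  nlinarith [mul_nonneg (exp_pos m).le hgap]

lemma setIntegral_Ioo_div_mul_log_sq_sub_sq_le_one {f : ℝ → ℝ} {a b F : ℝ}
    (hf0 : ∀ x ∈ Ioo a b, 0 ≤ f x) (hconc : ConcaveOn ℝ (Ioo a b) fun x => log (f x))
    (hbdd : BddAbove ((fun x => log (f x)) '' Ioo a b)) (hF : ∫ x in Ioo a b, f x = F)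
    (hFpos : 0 < F) :
    (∫ x in Ioo a b, f x / F * log (f x / F) ^ 2) - (∫ x in Ioo a b, f x / F * log (f x / F)) ^ 2
      ≤ 1 := by
  set u : ℝ → ℝ := fun x => log (f x)
  have hf : IntegrableOn f (Ioo a b) := by
    by_contra h
    exact hFpos.ne' (hF ▸ integral_undef h)
  have hne : (Ioo a b).Nonempty := by
    by_contra h
    rw [not_nonempty_iff_eq_empty] at h
    exact hFpos.ne' (by simp [← hF, h])
  set M := sSup (u '' Ioo a b)
  set v : ℝ → ℝ := fun x => M - u x
  have hv : ConvexOn ℝ (Ioo a b) v :=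
    (hconc.neg.add_const M).congr fun x _ => by simp only [v, Pi.add_apply, Pi.neg_apply]; ring
  have hv0 : ∀ x ∈ Ioo a b, 0 ≤ v x := fun x hx =>
    sub_nonneg.2 (le_csSup hbdd (mem_image_of_mem u hx))
  have hv_inf : ∀ ε ∈ Ioi 0, ∃ x ∈ Ioo a b, v x < ε := fun ε hε => by
    obtain ⟨_, ⟨x, hx, rfl⟩, hlt⟩ := exists_lt_of_lt_csSup (hne.image u) (sub_lt_self M hε)
    exact ⟨x, hx, by simp only [v]; linarith⟩
  refine integral_mul_log_sq_sub_sq_le_one (m := M - log F) (v := v)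
    (hf.div_const F).aestronglyMeasurable (by rw [integral_div, hF, div_self hFpos.ne'])
    ?_ (ae_restrict_of_forall_mem measurableSet_Ioo hv0) (hv.setIntegral_varGap_nonneg hv0 hv_inf)
  filter_upwards [hconc.ae_ne_or_forall_le measurableSet_Ioo 0,
    ae_restrict_mem measurableSet_Ioo] with x hx hxs
  rcases (hf0 x hxs).eq_or_lt with h0 | hpos
  · have hu0 : u x = 0 := by simp [u, ← h0]
    have hM : M = 0 := le_antisymm
      (csSup_le (hne.image u) (by
        rintro _ ⟨y, hy, rfl⟩
        exact hx.resolve_left (not_not.2 hu0) y hy))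
      (hu0 ▸ le_csSup hbdd (mem_image_of_mem u hxs))
    exact Or.inr ⟨by simp [← h0], by simp [v, hM, hu0]⟩
  · left
    rw [show M - log F - v x = log (f x / F) by simp only [v, u, log_div hpos.ne' hFpos.ne']; ring,
      exp_log (div_pos hpos hFpos)]

theorem past_varentropy_le_one_of_logConcave_general (f : ℝ → ℝ) (t Ft : ℝ) (ht : 0 < t)
    (hfnn : ∀ x, 0 ≤ f x)
    (hconc : ConcaveOn ℝ (Set.Ioi 0) (fun x => Real.log (f x)))
    (hFt : Ft = ∫ x in (0:ℝ)..t, f x) (hFpos : 0 < Ft) :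
    (∫ x in (0:ℝ)..t, f x / Ft * (Real.log (f x / Ft))^2)
      - (∫ x in (0:ℝ)..t, f x / Ft * Real.log (f x / Ft))^2 ≤ 1 := by
  simp only [intervalIntegral.integral_of_le ht.le, integral_Ioc_eq_integral_Ioo] at hFt ⊢
  exact setIntegral_Ioo_div_mul_log_sq_sub_sq_le_one (fun x _ => hfnn x)
    (hconc.subset Ioo_subset_Ioi_self (convex_Ioo 0 t)) (hconc.bddAbove_image_Ioo t) hFt.symm hFpos

/-- If `X` is a nonnegative absolutely continuous random variable with
log-concave pdf `f`, then the past varentropy satisfies `V(_tX) ≤ 1`. -/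
theorem past_varentropy_le_one_of_logConcave (f : ℝ → ℝ) (t Ft : ℝ) (ht : 0 < t)
    (hfnn : ∀ x, 0 ≤ f x) (hf0 : ∀ x ≤ (0:ℝ), f x = 0)
    (hpdf : (∫ x in Set.Ioi (0:ℝ), f x) = 1)
    (hconc : ConcaveOn ℝ (Set.Ioi 0) (fun x => Real.log (f x)))
    (hFt : Ft = ∫ x in (0:ℝ)..t, f x) (hFpos : 0 < Ft) :
    (∫ x in (0:ℝ)..t, f x / Ft * (Real.log (f x / Ft))^2)
      - (∫ x in (0:ℝ)..t, f x / Ft * Real.log (f x / Ft))^2 ≤ 1 :=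
  past_varentropy_le_one_of_logConcave_general f t Ft ht hfnn hconc hFt hFpos
end
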